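/- arXiv:2412.07733 — 4 statements merged into one kernel-verified Lean document; each statement's English description precedes it below -/
import Mathlib

section
/- Let n = 2m², and let S be the equi-n-square obtained by partitioning [n]×[n] into m×m boxes A_{i,j} (i,j ∈ [2m]), pairing A_{2k−1,2k−1} with A_{2k,2k} for k ∈ [m] and A_{i,j} with A_{j,i} for i < j, and giving each pair a unique colour. For k ∈ [2m], let C_k be the union of all boxes in the k-th box-row and k-th box-column. Then for every transversal T of S and every k ∈ [m], at least one colour appearing in C_{2k−1} ∪ C_{2k} is not used by T. -/
/-- The box of side length `m` containing a cell (0-indexed). -/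
def boxOf (m : ℕ) (p : ℕ × ℕ) : ℕ × ℕ := (p.1 / m, p.2 / m)

/-- Two boxes (0-indexed) are paired: diagonal boxes `A_{2k,2k}` and `A_{2k+1,2k+1}`,
and off-diagonal boxes `A_{i,j}` and `A_{j,i}` (`i ≠ j`). -/
def boxPaired (b b' : ℕ × ℕ) : Prop :=
  (b.1 = b.2 ∧ b'.1 = b'.2 ∧ b.1 / 2 = b'.1 / 2) ∨
  (b.1 ≠ b.2 ∧ (b' = b ∨ b' = (b.2, b.1)))

/-- A transversal: a set of cells sharing no row, column or symbol. -/
def IsTransversal {n : ℕ} (S : Fin n × Fin n → Fin n) (T : Finset (Fin n × Fin n)) : Prop :=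
  ∀ p ∈ T, ∀ q ∈ T, p ≠ q → p.1 ≠ q.1 ∧ p.2 ≠ q.2 ∧ S p ≠ S q

/-- Membership of a cell in `C_k` (0-indexed): the union of the boxes in the `k`-th
box-row and the `k`-th box-column. -/
def inC (m k : ℕ) (p : ℕ × ℕ) : Prop := p.1 / m = k ∨ p.2 / m = k


/-!
Suppose `T` meets every colour of `C_{2k} ∪ C_{2k+1}`. The cell of `T` carrying the colour of the
diagonal pair `A_{2k,2k}, A_{2k+1,2k+1}` lies in a diagonal box `A_{d,d}` with `d ∈ {2k, 2k+1}`.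
For every `j ∈ [2m]` the colour of `A_{d,j}` is then met by a cell of `T` in `A_{d,j}` or `A_{j,d}`,
and these cells are distinct for distinct `j`, since a cell in box-row or box-column `d`
determines `j` as its other box coordinate: that is `2m` cells of `T` in box-row `d` or
box-column `d`. But a transversal has at most `m` cells in a box-row and at most `m` in a
box-column, and the cell in `A_{d,d}` is counted twice, leaving room for only `2m - 1`.
-/

open Finset

lemma card_filter_div_eq_le_of_injOn {α : Type*} {s : Finset α} {f : α → ℕ}
    (hf : Set.InjOn f s) {m : ℕ} (hm : 0 < m) (d : ℕ) :
    #(s.filter fun a => f a / m = d) ≤ m := by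
  have := card_le_card_of_injOn (fun a => f a % m) (s := s.filter fun a => f a / m = d)
    (t := range m) (fun a _ => mem_range.mpr (Nat.mod_lt _ hm)) fun a ha b hb hab => by
      simp only [coe_filter, Set.mem_ofPred_eq] at ha hb
      refine hf ha.1 hb.1 ?_
      rw [← Nat.div_add_mod (f a) m, ← Nat.div_add_mod (f b) m, ha.2, hb.2]
      exact congrArg _ hab
  simpa using this

lemma le_card_filter_cross {α : Type*} (s : Finset α) (r c : α → ℕ) (d N : ℕ)
    (hcover : ∀ j < N, ∃ a ∈ s, (r a = d ∧ c a = j) ∨ (r a = j ∧ c a = d)) :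
    N ≤ #(s.filter fun a => r a = d ∨ c a = d) := by
  have hsub : range N ⊆ (s.filter fun a => r a = d ∨ c a = d).image
      fun a => if r a = d then c a else r a := by
    intro j hj
    obtain ⟨a, ha, hrc⟩ := hcover j (mem_range.mp hj)
    refine mem_image.mpr ⟨a, mem_filter.mpr ⟨ha, by omega⟩, ?_⟩
    split_ifs <;> omega
  simpa using (card_le_card hsub).trans card_image_le

namespace IsTransversal

variable {n : ℕ} {S : Fin n × Fin n → Fin n} {T : Finset (Fin n × Fin n)}

lemma injOn_row (hT : IsTransversal S T) : Set.InjOn (fun p : Fin n × Fin n => (p.1 : ℕ)) T :=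
  fun p hp q hq hpq => by_contra fun hne => (hT p hp q hq hne).1 (Fin.ext hpq)

lemma injOn_col (hT : IsTransversal S T) : Set.InjOn (fun p : Fin n × Fin n => (p.2 : ℕ)) T :=
  fun p hp q hq hpq => by_contra fun hne => (hT p hp q hq hne).2.1 (Fin.ext hpq)

lemma card_filter_cross_lt (hT : IsTransversal S T) {m : ℕ} (hm : 0 < m) {d : ℕ}
    {p : Fin n × Fin n} (hpT : p ∈ T) (hp : (p.1 : ℕ) / m = d ∧ (p.2 : ℕ) / m = d) :
    #(T.filter fun q => (q.1 : ℕ) / m = d ∨ (q.2 : ℕ) / m = d) < 2 * m := by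
  have hrow := card_filter_div_eq_le_of_injOn (injOn_row hT) hm d
  have hcol := card_filter_div_eq_le_of_injOn (injOn_col hT) hm d
  have hinter : 0 < #((T.filter fun q => (q.1 : ℕ) / m = d) ∩
      T.filter fun q => (q.2 : ℕ) / m = d) :=
    card_pos.mpr ⟨p, mem_inter.mpr ⟨mem_filter.mpr ⟨hpT, hp.1⟩, mem_filter.mpr ⟨hpT, hp.2⟩⟩⟩
  rw [filter_or]
  have := card_union_add_card_inter (T.filter fun q => (q.1 : ℕ) / m = d)
    (T.filter fun q => (q.2 : ℕ) / m = d)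
  omega

end IsTransversal

lemma exists_boxOf_eq {m a b : ℕ} (ha : a < 2 * m) (hb : b < 2 * m) :
    ∃ p : Fin (2 * m ^ 2) × Fin (2 * m ^ 2), boxOf m ((p.1 : ℕ), (p.2 : ℕ)) = (a, b) := by
  have hm : 0 < m := by omega
  have hlt : ∀ x < 2 * m, x * m < 2 * m ^ 2 := fun x hx => by nlinarith
  exact ⟨(⟨a * m, hlt a ha⟩, ⟨b * m, hlt b hb⟩), by
    simp [boxOf, Nat.mul_div_cancel _ hm]⟩

lemma boxPaired_diag {x y a : ℕ} (h : boxPaired (x, y) (a, a)) : x = y ∧ x / 2 = a / 2 := by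
  simp only [boxPaired, Prod.mk.injEq] at h
  omega

lemma boxPaired_offDiag {x y d j : ℕ} (hj : j ≠ d) (h : boxPaired (x, y) (d, j)) :
    (x = d ∧ y = j) ∨ (x = j ∧ y = d) := by
  simp only [boxPaired, Prod.mk.injEq] at h
  omega

theorem stmt2_general (m : ℕ)
    (S : Fin (2 * m ^ 2) × Fin (2 * m ^ 2) → Fin (2 * m ^ 2))
    (hS : ∀ p q : Fin (2 * m ^ 2) × Fin (2 * m ^ 2),
      S p = S q ↔ boxPaired (boxOf m ((p.1 : ℕ), (p.2 : ℕ))) (boxOf m ((q.1 : ℕ), (q.2 : ℕ))))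
    (T : Finset (Fin (2 * m ^ 2) × Fin (2 * m ^ 2))) (hT : IsTransversal S T)
    (k : ℕ) (hk : k < m) :
    ∃ c : Fin (2 * m ^ 2),
      (∃ p : Fin (2 * m ^ 2) × Fin (2 * m ^ 2),
        (inC m (2 * k) ((p.1 : ℕ), (p.2 : ℕ)) ∨ inC m (2 * k + 1) ((p.1 : ℕ), (p.2 : ℕ))) ∧
        S p = c) ∧
      ∀ p ∈ T, S p ≠ c := by
  by_contra! hcon
  have hmet : ∀ a b, a < 2 * m → b < 2 * m → a / 2 = k ∨ b / 2 = k →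
      ∃ q ∈ T, boxPaired ((q.1 : ℕ) / m, (q.2 : ℕ) / m) (a, b) := by
    intro a b ha hb hab
    obtain ⟨p, hp⟩ := exists_boxOf_eq ha hb
    have hpC : inC m (2 * k) ((p.1 : ℕ), (p.2 : ℕ)) ∨
        inC m (2 * k + 1) ((p.1 : ℕ), (p.2 : ℕ)) := by
      simp only [boxOf, Prod.mk.injEq] at hp
      simp only [inC]
      omega
    obtain ⟨q, hqT, hq⟩ := hcon (S p) ⟨p, hpC, rfl⟩
    exact ⟨q, hqT, hp ▸ (hS q p).mp hq⟩
  obtain ⟨pD, hpDT, hpD⟩ := hmet (2 * k) (2 * k) (by omega) (by omega) (by omega)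
  obtain ⟨hdCol, hdk⟩ := boxPaired_diag hpD
  generalize hdD : (pD.1 : ℕ) / m = d at hdCol hdk
  have hcover : ∀ j < 2 * m, ∃ q ∈ T, ((q.1 : ℕ) / m = d ∧ (q.2 : ℕ) / m = j) ∨
      ((q.1 : ℕ) / m = j ∧ (q.2 : ℕ) / m = d) := by
    intro j hj
    by_cases hjd : j = d
    · exact ⟨pD, hpDT, .inl ⟨hdD, by omega⟩⟩
    obtain ⟨q, hqT, hq⟩ := hmet d j (by omega) hj (by omega)
    exact ⟨q, hqT, boxPaired_offDiag hjd hq⟩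
  have hlower :=
    le_card_filter_cross T (fun q => (q.1 : ℕ) / m) (fun q => (q.2 : ℕ) / m) d _ hcover
  have hupper := IsTransversal.card_filter_cross_lt hT (by omega) hpDT ⟨hdD, by omega⟩
  omega

/-- In the paired-boxes equi-`n`-square with `n = 2m²`, for every transversal `T` and
every `k ∈ [m]` (0-indexed), at least one colour appearing in `C_{2k} ∪ C_{2k+1}` is
not used by `T`. -/
theorem stmt2 (m : ℕ) (hm : 1 ≤ m)
    (S : Fin (2 * m ^ 2) × Fin (2 * m ^ 2) → Fin (2 * m ^ 2))
    (hS : ∀ p q : Fin (2 * m ^ 2) × Fin (2 * m ^ 2),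
      S p = S q ↔ boxPaired (boxOf m ((p.1 : ℕ), (p.2 : ℕ))) (boxOf m ((q.1 : ℕ), (q.2 : ℕ))))
    (hequi : ∀ c : Fin (2 * m ^ 2),
      (Finset.univ.filter (fun p : Fin (2 * m ^ 2) × Fin (2 * m ^ 2) => S p = c)).card
        = 2 * m ^ 2)
    (T : Finset (Fin (2 * m ^ 2) × Fin (2 * m ^ 2))) (hT : IsTransversal S T)
    (k : ℕ) (hk : k < m) :
    ∃ c : Fin (2 * m ^ 2),
      (∃ p : Fin (2 * m ^ 2) × Fin (2 * m ^ 2),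
        (inC m (2 * k) ((p.1 : ℕ), (p.2 : ℕ)) ∨ inC m (2 * k + 1) ((p.1 : ℕ), (p.2 : ℕ))) ∧
        S p = c) ∧
      ∀ p ∈ T, S p ≠ c :=
  stmt2_general m S hS T hT k hk
end

section
/- Let n ∈ ℕ, m = ⌈√(n/2)⌉, r = ⌈√(m² − n/2)⌉, a = m + r, b = m − r. Then 0 ≤ m² − n/2 ≤ 2m ≤ 4√(n/2), 0 ≤ r² − (m² − n/2) ≤ 2r ≤ 8 n^{1/4}, and consequently n − 16 n^{1/4} ≤ 2ab ≤ n and b > √(n/2) − 8 n^{1/4}. -/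
/-!
Both `m` and `r` are ceilings of square roots, and for `c = ⌈√y⌉₊` one has `√y ≤ c < √y + 1`,
hence `0 ≤ c² - y = (c - √y)(c + √y) ≤ 2c`. Applied to `y = n/2` and to `y = m² - n/2` this
gives the two chains of defects; the bounds on `2ab = 2(m² - r²) = n - 2(r² - (m² - n/2))`
and on `b = m - r` then follow from `r ≤ 3 n^{1/4}`, itself a consequence of
`√(m² - n/2) ≤ √(4√(n/2)) ≤ 2 n^{1/4}`.
-/

open Real

lemma le_natCeil_sqrt_sq (y : ℝ) : y ≤ (⌈√y⌉₊ : ℝ) ^ 2 :=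
  (sqrt_le_iff.mp (Nat.le_ceil _)).2

lemma natCeil_sqrt_sq_sub_le {y : ℝ} (hy : 0 ≤ y) :
    (⌈√y⌉₊ : ℝ) ^ 2 - y ≤ 2 * ⌈√y⌉₊ := by
  have hlow : √y ≤ ⌈√y⌉₊ := Nat.le_ceil _
  have hup : (⌈√y⌉₊ : ℝ) < √y + 1 := Nat.ceil_lt_add_one (sqrt_nonneg y)
  calc (⌈√y⌉₊ : ℝ) ^ 2 - y = (⌈√y⌉₊ - √y) * (⌈√y⌉₊ + √y) := by
        linear_combination sq_sqrt hy
    _ ≤ 1 * (⌈√y⌉₊ + √y) := by gcongr; linarith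
    _ ≤ 2 * ⌈√y⌉₊ := by linarith

lemma rpow_one_div_four_sq {x : ℝ} (hx : 0 ≤ x) : (x ^ ((1 : ℝ) / 4)) ^ 2 = √x := by
  rw [sqrt_eq_rpow, ← rpow_natCast, ← rpow_mul hx]
  norm_num

/-- Numerical estimates for the parameters of the general construction: with
`m = ⌈√(n/2)⌉`, `r = ⌈√(m² − n/2)⌉`, `a = m + r` and `b = m − r`, we have
`0 ≤ m² − n/2 ≤ 2m ≤ 4√(n/2)`, `0 ≤ r² − (m² − n/2) ≤ 2r ≤ 8 n^{1/4}`,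
`n − 16 n^{1/4} ≤ 2ab ≤ n` and `b > √(n/2) − 8 n^{1/4}`. -/
theorem stmt5 (n : ℕ) (hn : 1 ≤ n) (m r : ℕ) (a b : ℝ)
    (hm : m = ⌈Real.sqrt ((n : ℝ) / 2)⌉₊)
    (hr : r = ⌈Real.sqrt ((m : ℝ) ^ 2 - (n : ℝ) / 2)⌉₊)
    (ha : a = (m : ℝ) + (r : ℝ)) (hb : b = (m : ℝ) - (r : ℝ)) :
    (0 ≤ (m : ℝ) ^ 2 - (n : ℝ) / 2 ∧ (m : ℝ) ^ 2 - (n : ℝ) / 2 ≤ 2 * (m : ℝ) ∧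
      2 * (m : ℝ) ≤ 4 * Real.sqrt ((n : ℝ) / 2)) ∧
    (0 ≤ (r : ℝ) ^ 2 - ((m : ℝ) ^ 2 - (n : ℝ) / 2) ∧
      (r : ℝ) ^ 2 - ((m : ℝ) ^ 2 - (n : ℝ) / 2) ≤ 2 * (r : ℝ) ∧
      2 * (r : ℝ) ≤ 8 * (n : ℝ) ^ ((1 : ℝ) / 4)) ∧
    ((n : ℝ) - 16 * (n : ℝ) ^ ((1 : ℝ) / 4) ≤ 2 * a * b ∧ 2 * a * b ≤ (n : ℝ)) ∧
    b > Real.sqrt ((n : ℝ) / 2) - 8 * (n : ℝ) ^ ((1 : ℝ) / 4) := by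
  have hn' : (1 : ℝ) ≤ n := by exact_mod_cast hn
  set s := √((n : ℝ) / 2)
  set u := (n : ℝ) ^ ((1 : ℝ) / 4)
  have hu : 1 ≤ u := one_le_rpow hn' (by norm_num)
  have hsu : s ≤ u ^ 2 := by
    rw [rpow_one_div_four_sq (by positivity)]
    exact sqrt_le_sqrt (by linarith)
  have hd0 : 0 ≤ (m : ℝ) ^ 2 - n / 2 := by rw [hm]; exact sub_nonneg.2 (le_natCeil_sqrt_sq _)
  have hd : (m : ℝ) ^ 2 - n / 2 ≤ 2 * m := by rw [hm]; exact natCeil_sqrt_sq_sub_le (by positivity)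
  have hsm : s ≤ m := hm ▸ Nat.le_ceil s
  have hms : (m : ℝ) ≤ 2 * s := by
    rw [hm]
    exact Nat.ceil_le_two_mul ((le_sqrt (by norm_num) (by positivity)).2 (by linarith))
  have he0 : 0 ≤ (r : ℝ) ^ 2 - ((m : ℝ) ^ 2 - n / 2) := by
    rw [hr]; exact sub_nonneg.2 (le_natCeil_sqrt_sq _)
  have he : (r : ℝ) ^ 2 - ((m : ℝ) ^ 2 - n / 2) ≤ 2 * r := by
    rw [hr]; exact natCeil_sqrt_sq_sub_le hd0
  have hru : (r : ℝ) ≤ 3 * u := by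
    have hsqrt : √((m : ℝ) ^ 2 - n / 2) ≤ 2 * u :=
      sqrt_le_iff.mpr ⟨by positivity, by linarith⟩
    have hr_lt := hr ▸ Nat.ceil_lt_add_one (sqrt_nonneg ((m : ℝ) ^ 2 - n / 2))
    linarith
  have hab : 2 * a * b = n - 2 * ((r : ℝ) ^ 2 - ((m : ℝ) ^ 2 - n / 2)) := by rw [ha, hb]; ring
  refine ⟨⟨hd0, hd, by linarith⟩, ⟨he0, he, by linarith⟩, ⟨by linarith, by linarith⟩, ?_⟩
  rw [hb]; linarith
end

section
/- Let t ∈ ℕ and let H be the 3-partite 3-uniform hypergraph with vertex classes X = {x_1,…,x_{2t}, x'_1,…,x'_t}, Y = {y_1,…,y_{2t}, y'_1,…,y'_t}, Z = {z_1,…,z_{2t}, z'_1,…,z'_t} and edge set {(x_i, y_i, z'_j), (x_i, y'_j, z_i), (x'_j, y_i, z_i) : i ∈ [2t], j ∈ [t]}. Then H is 2t-regular, and every matching in H has at most 2t edges, hence covers at most 2|V(H)|/3 vertices. -/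
/-- Vertices of the hypergraph: three classes (indexed by `Fin 3`), each consisting of
`2t` ordinary vertices (`Sum.inl`) and `t` primed vertices (`Sum.inr`). -/
abbrev V7 (t : ℕ) := Fin 3 × (Fin (2 * t) ⊕ Fin t)

/-- The edge set `{(x_i, y_i, z'_j), (x_i, y'_j, z_i), (x'_j, y_i, z_i) : i ∈ [2t], j ∈ [t]}`. -/
def edges7 (t : ℕ) : Finset (Finset (V7 t)) :=
  (Finset.univ : Finset (Fin (2 * t) × Fin t × Fin 3)).image (fun w =>
    if w.2.2 = 0 then
      {((0 : Fin 3), Sum.inl w.1), ((1 : Fin 3), Sum.inl w.1), ((2 : Fin 3), Sum.inr w.2.1)}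
    else if w.2.2 = 1 then
      {((0 : Fin 3), Sum.inl w.1), ((1 : Fin 3), Sum.inr w.2.1), ((2 : Fin 3), Sum.inl w.1)}
    else
      {((0 : Fin 3), Sum.inr w.2.1), ((1 : Fin 3), Sum.inl w.1), ((2 : Fin 3), Sum.inl w.1)})

/-- The edge attached to the parameter `w = (i, j, k)`. -/
def f7 (t : ℕ) (w : Fin (2 * t) × Fin t × Fin 3) : Finset (V7 t) :=
    if w.2.2 = 0 then
      {((0 : Fin 3), Sum.inl w.1), ((1 : Fin 3), Sum.inl w.1), ((2 : Fin 3), Sum.inr w.2.1)}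
    else if w.2.2 = 1 then
      {((0 : Fin 3), Sum.inl w.1), ((1 : Fin 3), Sum.inr w.2.1), ((2 : Fin 3), Sum.inl w.1)}
    else
      {((0 : Fin 3), Sum.inr w.2.1), ((1 : Fin 3), Sum.inl w.1), ((2 : Fin 3), Sum.inl w.1)}

lemma edges7_eq (t : ℕ) : edges7 t = Finset.univ.image (f7 t) := rfl

set_option linter.unreachableTactic false
set_option linter.unusedTactic false

lemma f7_inj (t : ℕ) : Function.Injective (f7 t) := by
  rintro ⟨a, j, k⟩ ⟨a', j', k'⟩ h
  fin_cases k <;> fin_cases k' <;>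
    simp [f7, Finset.ext_iff, Prod.forall, Sum.forall, Prod.mk.injEq] at h <;>
  first
  | exact absurd (((h _).2 j).mp ⟨rfl, rfl⟩).1 (by decide)
  | (have hj : j = j' := ((h _).2 j rfl).mp rfl
     have ha : a = a' := by
       rcases ((h _).1 a).mp (Or.inl ⟨rfl, rfl⟩) with ⟨_, h'⟩ | ⟨hc, _⟩
       · exact h'
       · exact absurd hc (by decide)
     subst ha; subst hj; rfl)

lemma card_f7_le (t : ℕ) (w : Fin (2 * t) × Fin t × Fin 3) : (f7 t w).card ≤ 3 := by
  unfold f7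
  split_ifs <;>
    exact le_trans (Finset.card_insert_le _ _)
      (Nat.succ_le_succ (le_trans (Finset.card_insert_le _ _)
        (Nat.succ_le_succ (Finset.card_singleton _).le)))

lemma f7_not_disjoint (t : ℕ) (i : Fin (2 * t)) (j j' : Fin t) (k k' : Fin 3) :
    ¬ Disjoint (f7 t (i, j, k)) (f7 t (i, j', k')) := by
  intro hd
  rw [Finset.disjoint_left] at hd
  fin_cases k <;> fin_cases k' <;>
  first
  | (refine @hd ((0 : Fin 3), Sum.inl i) ?_ ?_ <;> (simp [f7]; done))
  | (refine @hd ((1 : Fin 3), Sum.inl i) ?_ ?_ <;> (simp [f7]; done))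
  | (refine @hd ((2 : Fin 3), Sum.inl i) ?_ ?_ <;> (simp [f7]; done))

set_option maxHeartbeats 1000000 in
lemma deg7 (t : ℕ) (v : V7 t) :
    ((edges7 t).filter (fun e => v ∈ e)).card = 2 * t := by
  rw [edges7_eq, Finset.filter_image,
    Finset.card_image_of_injective _ (f7_inj t)]
  obtain ⟨c, x⟩ := v
  rcases x with i | j
  · -- ordinary vertex (c, inl i): lies in edges (i, j, k) for the two k's avoiding class c
    obtain ⟨k₁, k₂, hk, hset⟩ : ∃ k₁ k₂ : Fin 3, k₁ ≠ k₂ ∧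
        (Finset.univ.filter fun w => (c, Sum.inl i) ∈ f7 t w) =
          (Finset.univ.image fun j : Fin t => (i, j, k₁)) ∪
          (Finset.univ.image fun j : Fin t => (i, j, k₂)) := by
      fin_cases c
      · refine ⟨0, 1, by decide, ?_⟩
        ext ⟨a, b, k⟩
        fin_cases k <;> simp only [Finset.mem_filter, Finset.mem_univ, true_and] <;> simp [f7, Prod.mk.injEq, eq_comm] <;> aesop
      · refine ⟨0, 2, by decide, ?_⟩
        ext ⟨a, b, k⟩
        fin_cases k <;> simp only [Finset.mem_filter, Finset.mem_univ, true_and] <;> simp [f7, Prod.mk.injEq, eq_comm] <;> aesop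
      · refine ⟨1, 2, by decide, ?_⟩
        ext ⟨a, b, k⟩
        fin_cases k <;> simp only [Finset.mem_filter, Finset.mem_univ, true_and] <;> simp [f7, Prod.mk.injEq, eq_comm] <;> aesop
    rw [hset, Finset.card_union_of_disjoint, Finset.card_image_of_injective,
      Finset.card_image_of_injective]
    · simp [Finset.card_univ]; omega
    · intro x y hxy; simpa [Prod.mk.injEq] using hxy
    · intro x y hxy; simpa [Prod.mk.injEq] using hxy
    · rw [Finset.disjoint_left]
      rintro ⟨a, b, k⟩ h1 h2
      simp only [Finset.mem_image, Finset.mem_univ, true_and] at h1 h2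
      obtain ⟨x, hx⟩ := h1; obtain ⟨y, hy⟩ := h2
      rw [← hy] at hx
      exact hk (congrArg (fun p => p.2.2) hx)
  · -- primed vertex (c, inr j)
    obtain ⟨k₀, hset⟩ : ∃ k₀ : Fin 3,
        (Finset.univ.filter fun w => (c, Sum.inr j) ∈ f7 t w) =
          (Finset.univ.image fun a : Fin (2 * t) => (a, j, k₀)) := by
      fin_cases c
      · refine ⟨2, ?_⟩
        ext ⟨a, b, k⟩
        fin_cases k <;> simp only [Finset.mem_filter, Finset.mem_univ, true_and] <;> simp [f7, Prod.mk.injEq, eq_comm] <;> aesop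
      · refine ⟨1, ?_⟩
        ext ⟨a, b, k⟩
        fin_cases k <;> simp only [Finset.mem_filter, Finset.mem_univ, true_and] <;> simp [f7, Prod.mk.injEq, eq_comm] <;> aesop
      · refine ⟨0, ?_⟩
        ext ⟨a, b, k⟩
        fin_cases k <;> simp only [Finset.mem_filter, Finset.mem_univ, true_and] <;> simp [f7, Prod.mk.injEq, eq_comm] <;> aesop
    rw [hset, Finset.card_image_of_injective]
    · simp
    · intro x y hxy; simpa [Prod.mk.injEq] using hxy

/-- The hypergraph `H` above is `2t`-regular, and every matching in `H` has at most `2t`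
edges, hence covers at most `2|V(H)|/3` vertices. -/
theorem stmt7 (t : ℕ) :
    (∀ v : V7 t, ((edges7 t).filter (fun e => v ∈ e)).card = 2 * t) ∧
    (∀ M ⊆ edges7 t, (∀ e ∈ M, ∀ e' ∈ M, e ≠ e' → Disjoint e e') →
      M.card ≤ 2 * t ∧ (M.biUnion id).card ≤ 2 * Fintype.card (V7 t) / 3) := by
  classical
  refine ⟨deg7 t, fun M hM hmatch => ?_⟩
  have hmem : ∀ e ∈ M, ∃ w, f7 t w = e := by
    intro e he
    have := hM he
    rw [edges7_eq] at this
    simpa [eq_comm] using this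
  -- the set of parameters of edges in M
  set W : Finset (Fin (2 * t) × Fin t × Fin 3) :=
    Finset.univ.filter (fun w => f7 t w ∈ M) with hW
  have hMW : M = W.image (f7 t) := by
    apply Finset.Subset.antisymm
    · intro e he
      obtain ⟨w, hw⟩ := hmem e he
      refine Finset.mem_image.mpr ⟨w, ?_, hw⟩
      simp [hW, hw, he]
    · intro e he
      obtain ⟨w, hw, hfw⟩ := Finset.mem_image.mp he
      simp only [hW, Finset.mem_filter] at hw
      rw [← hfw]; exact hw.2
  have hcardMW : M.card = W.card := by
    rw [hMW, Finset.card_image_of_injective _ (f7_inj t)]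
  have hcard : M.card ≤ 2 * t := by
    rw [hcardMW]
    have : W.card ≤ (Finset.univ : Finset (Fin (2 * t))).card := by
      apply Finset.card_le_card_of_injOn (fun w => w.1)
      · intro w _; exact Finset.mem_univ _
      · rintro ⟨i, j, k⟩ hw ⟨i', j', k'⟩ hw' (hii : i = i')
        subst hii
        simp only [hW, Finset.coe_filter, Set.mem_setOf_eq, Finset.mem_univ, true_and] at hw hw'
        by_contra hne
        have hne' : f7 t (i, j, k) ≠ f7 t (i, j', k') := fun hEq => hne (by
          have := f7_inj t hEq
          simpa using this)
        exact f7_not_disjoint t i j j' k k'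
          (hmatch _ hw _ hw' hne')
    simpa using this
  refine ⟨hcard, ?_⟩
  have hbi : (M.biUnion id).card ≤ M.card * 3 := by
    apply Finset.card_biUnion_le_card_mul
    intro e he
    obtain ⟨w, hw⟩ := hmem e he
    simpa [← hw] using card_f7_le t w
  have hV : Fintype.card (V7 t) = 3 * (2 * t + t) := by simp
  rw [hV]
  omega
end

section
/- Let X₁,…,X_n be independent random variables with X_i taking values in Ω_i, and let f : ∏ Ω_i → ℝ be such that changing the i-th coordinate changes f by at most c_i. Then for all t > 0, ℙ(|f(X) − 𝔼 f(X)| > t) ≤ 2 exp(−t² / Σ_{i∈[n]} c_i²). -/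
open MeasureTheory

open Real

universe u

lemma mcdiarmid_log_le (p : ℝ) (hp0 : 0 ≤ p) (hp1 : p ≤ 1) (u : ℝ) :
    Real.log (1 - p + p * Real.exp u) ≤ p * u + u ^ 2 / 4 := by
  set D : ℝ → ℝ := fun u => 1 - p + p * Real.exp u with hDdef
  have hD : ∀ u, 0 < D u := by
    intro u
    rcases eq_or_lt_of_le hp0 with h | h
    · simp [hDdef, ← h]
    · have : 0 < p * Real.exp u := mul_pos h (Real.exp_pos u)
      have : (0:ℝ) ≤ 1 - p := by linarith
      simp only [hDdef]; linarith
  have hDd : ∀ u, HasDerivAt D (p * Real.exp u) u := by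
    intro u
    exact ((Real.hasDerivAt_exp u).const_mul p).const_add (1 - p)
  set ψ : ℝ → ℝ := fun u => p * u + u ^ 2 / 4 - Real.log (D u) with hψdef
  set ψd : ℝ → ℝ := fun u => p + u / 2 - p * Real.exp u / D u with hψddef
  set ψdd : ℝ → ℝ := fun u =>
      1/2 - (p * Real.exp u * D u - p * Real.exp u * (p * Real.exp u)) / D u ^ 2 with hψdddef
  have hψd : ∀ u, HasDerivAt ψ (ψd u) u := by
    intro u
    have h1 : HasDerivAt (fun u : ℝ => p * u + u ^ 2 / 4) (p + 2 * u ^ 1 / 4) u :=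
      ((hasDerivAt_id u).const_mul p).add ((hasDerivAt_pow 2 u).div_const 4) |>.congr_deriv
        (by ring)
    have h2 : HasDerivAt (fun u => Real.log (D u)) (p * Real.exp u / D u) u :=
      (hDd u).log (hD u).ne'
    exact (h1.sub h2).congr_deriv (by ring)
  have hψdd : ∀ u, HasDerivAt ψd (ψdd u) u := by
    intro u
    have h1 : HasDerivAt (fun u : ℝ => p + u / 2) (1 / 2) u := by
      simpa using ((hasDerivAt_id u).div_const 2).const_add p
    have h2 : HasDerivAt (fun u => p * Real.exp u / D u)
        ((p * Real.exp u * D u - p * Real.exp u * (p * Real.exp u)) / D u ^ 2) u :=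
      ((Real.hasDerivAt_exp u).const_mul p).div (hDd u) (hD u).ne'
    exact h1.sub h2
  have hψdd_nonneg : ∀ u, 0 ≤ ψdd u := by
    intro u
    have hE : 0 ≤ p * Real.exp u := mul_nonneg hp0 (Real.exp_pos u).le
    have hED : p * Real.exp u ≤ D u := by simp only [hDdef]; linarith
    have hDu := hD u
    have key : (p * Real.exp u * D u - p * Real.exp u * (p * Real.exp u)) / D u ^ 2 ≤ 1/2 := by
      rw [div_le_iff₀ (by positivity)]
      nlinarith [sq_nonneg (D u - 2 * (p * Real.exp u))]
    simp only [hψdddef]; linarith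
  have hψd_mono : Monotone ψd :=
    monotone_of_deriv_nonneg (fun u => (hψdd u).differentiableAt) fun u => by
      rw [(hψdd u).deriv]; exact hψdd_nonneg u
  have hψd0 : ψd 0 = 0 := by
    simp [hψddef, hDdef]
  have hψ0 : ψ 0 = 0 := by simp [hψdef, hDdef]
  have key : 0 ≤ ψ u := by
    rcases le_total 0 u with h | h
    · have hmono : MonotoneOn ψ (Set.Ici 0) := by
        apply monotoneOn_of_deriv_nonneg (convex_Ici 0)
          (fun x _ => (hψd x).differentiableAt.continuousAt.continuousWithinAt)
          (fun x _ => (hψd x).differentiableAt.differentiableWithinAt)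
        intro x hx
        rw [(hψd x).deriv]
        rw [interior_Ici] at hx
        calc (0:ℝ) = ψd 0 := hψd0.symm
          _ ≤ ψd x := hψd_mono (le_of_lt hx)
      calc (0:ℝ) = ψ 0 := hψ0.symm
        _ ≤ ψ u := hmono (by simp) (by simpa using h) h
    · have hanti : AntitoneOn ψ (Set.Iic 0) := by
        apply antitoneOn_of_deriv_nonpos (convex_Iic 0)
          (fun x _ => (hψd x).differentiableAt.continuousAt.continuousWithinAt)
          (fun x _ => (hψd x).differentiableAt.differentiableWithinAt)
        intro x hx
        rw [(hψd x).deriv]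
        rw [interior_Iic] at hx
        calc ψd x ≤ ψd 0 := hψd_mono (le_of_lt hx)
          _ = 0 := hψd0
      calc (0:ℝ) = ψ 0 := hψ0.symm
        _ ≤ ψ u := hanti (by simpa using h) (by simp) h
  simp only [hψdef] at key
  linarith

lemma mcdiarmid_nonempty {E : Type*} [MeasurableSpace E] (ν : Measure E)
    [IsProbabilityMeasure ν] : Nonempty E := by
  by_contra h
  rw [not_nonempty_iff] at h
  have h1 : ν Set.univ = 0 := by rw [Set.univ_eq_empty_iff.mpr h, measure_empty]
  rw [measure_univ] at h1
  exact one_ne_zero h1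

lemma mcdiarmid_bint {E : Type*} [MeasurableSpace E] {ν : Measure E} [IsFiniteMeasure ν]
    {g : E → ℝ} (hg : Measurable g) {M : ℝ} (h : ∀ x, |g x| ≤ M) : Integrable g ν :=
  (integrable_const M).mono' hg.aestronglyMeasurable
    (by filter_upwards with x; rw [Real.norm_eq_abs]; exact h x)

lemma mcdiarmid_osc {n : ℕ} {Ω : Fin n → Type*} (c : Fin n → ℝ) (f : (∀ i, Ω i) → ℝ)
    (hlip : ∀ (i : Fin n) (x y : ∀ i, Ω i), (∀ j, j ≠ i → x j = y j) → |f x - f y| ≤ c i)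
    (x y : ∀ i, Ω i) : |f x - f y| ≤ ∑ i, c i := by
  classical
  set w : ℕ → ∀ i, Ω i := fun k i => if (i : ℕ) < k then y i else x i with hw
  set c' : ℕ → ℝ := fun i => if h : i < n then c ⟨i, h⟩ else 0 with hc'
  have key : ∀ k, k ≤ n → |f x - f (w k)| ≤ ∑ i ∈ Finset.range k, c' i := by
    intro k
    induction k with
    | zero =>
      intro _
      have : w 0 = x := funext fun i => by simp [hw]
      simp [this]
    | succ k ihk =>
      intro hk
      have hkn : k < n := hk
      have hstep : |f (w k) - f (w (k + 1))| ≤ c ⟨k, hkn⟩ := by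
        apply hlip ⟨k, hkn⟩
        intro j hj
        have hjk : (j : ℕ) ≠ k := fun hh => hj (Fin.ext hh)
        simp only [hw]
        rcases lt_trichotomy (j : ℕ) k with h | h | h
        · rw [if_pos h, if_pos (by omega)]
        · exact absurd h hjk
        · rw [if_neg (by omega), if_neg (by omega)]
      calc |f x - f (w (k + 1))|
          ≤ |f x - f (w k)| + |f (w k) - f (w (k + 1))| := by
            have := abs_add_le (f x - f (w k)) (f (w k) - f (w (k + 1)))
            simpa using this
        _ ≤ (∑ i ∈ Finset.range k, c' i) + c ⟨k, hkn⟩ := by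
            exact add_le_add (ihk (le_of_lt hk)) hstep
        _ = ∑ i ∈ Finset.range (k + 1), c' i := by
            rw [Finset.sum_range_succ, hc']
            simp [hkn]
  have hwn : w n = y := funext fun i => by simp [hw, i.isLt]
  have hfin : ∑ i ∈ Finset.range n, c' i = ∑ i, c i := by
    rw [← Fin.sum_univ_eq_sum_range]
    exact Finset.sum_congr rfl fun i _ => by simp [hc', i.isLt]
  have := key n le_rfl
  rwa [hwn, hfin] at this

lemma mcdiarmid_hoeffding {E : Type*} [MeasurableSpace E] [Nonempty E] (ν : Measure E)
    [IsProbabilityMeasure ν] (g : E → ℝ) (hg : Measurable g) (c L : ℝ) (hc : 0 ≤ c)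
    (hosc : ∀ x y, |g x - g y| ≤ c) :
    ∫ x, Real.exp (L * (g x - ∫ y, g y ∂ν)) ∂ν ≤ Real.exp (L ^ 2 * c ^ 2 / 4) := by
  classical
  obtain ⟨x₀⟩ := ‹Nonempty E›
  have hbdd : BddBelow (Set.range g) := by
    refine ⟨g x₀ - c, ?_⟩
    rintro _ ⟨y, rfl⟩
    have := abs_le.1 (hosc x₀ y)
    linarith [this.2]
  set a := sInf (Set.range g) with ha
  have hlb : ∀ x, a ≤ g x := fun x => csInf_le hbdd ⟨x, rfl⟩
  have hub : ∀ x, g x ≤ a + c := by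
    intro x
    have : g x - c ≤ a := by
      apply le_csInf (Set.range_nonempty g)
      rintro _ ⟨y, rfl⟩
      have := abs_le.1 (hosc x y)
      linarith [this.2]
    linarith
  have hgint : Integrable g ν := by
    refine (integrable_const (|a| + c)).mono' hg.aestronglyMeasurable ?_
    filter_upwards with x
    rw [Real.norm_eq_abs]
    exact abs_le.2 ⟨by linarith [neg_abs_le a, hlb x], by linarith [le_abs_self a, hub x]⟩
  set m := ∫ y, g y ∂ν with hm
  have ham : a ≤ m := by
    calc a = ∫ _, a ∂ν := by simp
    _ ≤ m := integral_mono (integrable_const a) hgint hlb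
  have hmac : m ≤ a + c := by
    calc m ≤ ∫ _, a + c ∂ν := integral_mono hgint (integrable_const _) hub
    _ = a + c := by simp
  rcases eq_or_lt_of_le hc with hc0 | hc0
  · have hgx : ∀ x, g x = a := fun x => le_antisymm (by linarith [hub x]) (hlb x)
    have hma : m = a := le_antisymm (by linarith) ham
    have : ∀ x, Real.exp (L * (g x - m)) = 1 := by intro x; simp [hgx x, hma]
    rw [integral_congr_ae (Filter.Eventually.of_forall this)]
    simp [← hc0]
  -- main case c > 0
  set α := a - m with hα
  set β := a + c - m with hβ
  have hα0 : α ≤ 0 := by simp [hα]; linarith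
  have hβ0 : 0 ≤ β := by simp [hβ]; linarith
  have hβα : β = α + c := by simp [hα, hβ]; ring
  set Y : E → ℝ := fun x => g x - m with hY
  have hYint : Integrable Y ν := hgint.sub (integrable_const m)
  have hYlb : ∀ x, α ≤ Y x := fun x => by simp [hY, hα]; linarith [hlb x]
  have hYub : ∀ x, Y x ≤ β := fun x => by simp [hY, hβ]; linarith [hub x]
  set e1 := Real.exp (L * α) with he1
  set e2 := Real.exp (L * β) with he2
  have hpt : ∀ x, Real.exp (L * Y x) ≤ ((β - Y x) * e1 + (Y x - α) * e2) / c := by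
    intro x
    have hy1 := hYlb x
    have hy2 := hYub x
    have hw1 : 0 ≤ (β - Y x) / c := div_nonneg (by linarith) hc0.le
    have hw2 : 0 ≤ (Y x - α) / c := div_nonneg (by linarith) hc0.le
    have hws : (β - Y x) / c + (Y x - α) / c = 1 := by
      field_simp
      rw [hβα]; ring
    have hcvx := convexOn_exp.2 (Set.mem_univ (L * α)) (Set.mem_univ (L * β)) hw1 hw2 hws
    simp only [smul_eq_mul] at hcvx
    have harg : (β - Y x) / c * (L * α) + (Y x - α) / c * (L * β) = L * Y x := by
      have hc' : c ≠ 0 := hc0.ne'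
      field_simp
      rw [hβα]; ring
    rw [harg] at hcvx
    calc Real.exp (L * Y x) ≤ (β - Y x) / c * e1 + (Y x - α) / c * e2 := hcvx
      _ = ((β - Y x) * e1 + (Y x - α) * e2) / c := by ring
  have hlhs_int : Integrable (fun x => Real.exp (L * Y x)) ν := by
    refine (integrable_const (Real.exp (|L| * (|α| + |β|)))).mono'
      (((hg.sub measurable_const).const_mul L).exp.aestronglyMeasurable) ?_
    filter_upwards with x
    rw [Real.norm_eq_abs, abs_of_pos (Real.exp_pos _), Real.exp_le_exp]
    have h1 : |Y x| ≤ |α| + |β| := by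
      rcases abs_cases α with ⟨h,_⟩|⟨h,_⟩ <;> rcases abs_cases β with ⟨h',_⟩|⟨h',_⟩ <;>
        [skip; skip; skip; skip] <;>
      · have := hYlb x; have := hYub x
        rw [abs_le]; constructor <;> nlinarith
    calc L * Y x ≤ |L * Y x| := le_abs_self _
      _ = |L| * |Y x| := abs_mul _ _
      _ ≤ |L| * (|α| + |β|) := by
          exact mul_le_mul_of_nonneg_left h1 (abs_nonneg L)
  have hrhs_int : Integrable (fun x => ((β - Y x) * e1 + (Y x - α) * e2) / c) ν :=
    ((((integrable_const β).sub hYint).mul_const e1).add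
      ((hYint.sub (integrable_const α)).mul_const e2)).div_const c
  have hmono := integral_mono hlhs_int hrhs_int hpt
  have hYzero : ∫ x, Y x ∂ν = 0 := by
    rw [integral_sub hgint (integrable_const m)]
    simp [hm]
  have hrhs_val : ∫ x, ((β - Y x) * e1 + (Y x - α) * e2) / c ∂ν = (β * e1 - α * e2) / c := by
    have hre : (fun x => ((β - Y x) * e1 + (Y x - α) * e2) / c)
        = fun x => ((β * e1 - α * e2) + (e2 - e1) * Y x) / c := by funext x; ring
    calc ∫ x, ((β - Y x) * e1 + (Y x - α) * e2) / c ∂ν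
        = ∫ x, ((β * e1 - α * e2) + (e2 - e1) * Y x) / c ∂ν := by rw [hre]
      _ = (∫ x, (β * e1 - α * e2) + (e2 - e1) * Y x ∂ν) / c := integral_div c _
      _ = (β * e1 - α * e2) / c := by
          rw [integral_add (integrable_const _) (hYint.const_mul _), integral_const_mul,
            hYzero, integral_const]
          simp
  rw [hrhs_val] at hmono
  -- now bound (β * e1 - α * e2)/c
  set p := -α / c with hp
  have hp0 : 0 ≤ p := div_nonneg (neg_nonneg.2 hα0) hc0.le
  have hp1 : p ≤ 1 := by
    rw [hp, div_le_one hc0]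
    linarith [hβα, hβ0]
  set u := L * c with hu
  have hid : (β * e1 - α * e2) / c = e1 * (1 - p + p * Real.exp u) := by
    have hc' : c ≠ 0 := hc0.ne'
    have he2' : e2 = e1 * Real.exp u := by
      rw [he1, he2, hu, ← Real.exp_add, hβα]; ring_nf
    rw [he2', hp]
    field_simp
    rw [hβα]; ring
  have hDpos : 0 < 1 - p + p * Real.exp u := by
    rcases eq_or_lt_of_le hp0 with h | h
    · simp [← h]
    · nlinarith [Real.exp_pos u, mul_pos h (Real.exp_pos u)]
  have hbound : 1 - p + p * Real.exp u ≤ Real.exp (p * u + u ^ 2 / 4) :=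
    (Real.log_le_iff_le_exp hDpos).1 (mcdiarmid_log_le p hp0 hp1 u)
  have hfinal : e1 * (1 - p + p * Real.exp u) ≤ Real.exp (L ^ 2 * c ^ 2 / 4) := by
    calc e1 * (1 - p + p * Real.exp u) ≤ e1 * Real.exp (p * u + u ^ 2 / 4) := by
          exact mul_le_mul_of_nonneg_left hbound (Real.exp_pos _).le
      _ = Real.exp (L * α + (p * u + u ^ 2 / 4)) := by rw [he1, ← Real.exp_add]
      _ = Real.exp (L ^ 2 * c ^ 2 / 4) := by
          congr 1
          have hc' : c ≠ 0 := hc0.ne'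
          rw [hp, hu]
          field_simp
          ring
  calc ∫ x, Real.exp (L * (g x - m)) ∂ν = ∫ x, Real.exp (L * Y x) ∂ν := rfl
    _ ≤ (β * e1 - α * e2) / c := hmono
    _ = e1 * (1 - p + p * Real.exp u) := hid
    _ ≤ Real.exp (L ^ 2 * c ^ 2 / 4) := hfinal

lemma mcdiarmid_absint {E : Type*} [MeasurableSpace E] (ν : Measure E) (g : E → ℝ) :
    |∫ x, g x ∂ν| ≤ ∫ x, |g x| ∂ν := by
  simpa [Real.norm_eq_abs] using norm_integral_le_integral_norm (μ := ν) g


lemma mcdiarmid_mgf : ∀ (n : ℕ) (Ω : Fin n → Type u) (inst : ∀ i, MeasurableSpace (Ω i))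
    (μ : ∀ i, Measure (Ω i)) (hprob : ∀ i, IsProbabilityMeasure (μ i))
    (c : Fin n → ℝ) (f : (∀ i, Ω i) → ℝ) (hf : Measurable f)
    (hlip : ∀ (i : Fin n) (x y : ∀ i, Ω i), (∀ j, j ≠ i → x j = y j) → |f x - f y| ≤ c i)
    (L : ℝ),
    ∫ x, Real.exp (L * (f x - ∫ y, f y ∂(Measure.pi μ))) ∂(Measure.pi μ)
      ≤ Real.exp (L ^ 2 * (∑ i, c i ^ 2) / 4) := by
  intro n
  induction n with
  | zero =>
    intro Ω inst μ hprob c f hf hlip L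
    haveI := hprob
    haveI : Subsingleton (∀ i : Fin 0, Ω i) := ⟨fun a b => funext fun i => i.elim0⟩
    haveI : IsProbabilityMeasure (Measure.pi μ) := by infer_instance
    have hne : Nonempty (∀ i : Fin 0, Ω i) := ⟨fun i => i.elim0⟩
    obtain ⟨x₀⟩ := hne
    have hconst : ∀ x, f x = f x₀ := fun x => by rw [Subsingleton.elim x x₀]
    have hint : ∫ y, f y ∂(Measure.pi μ) = f x₀ := by
      rw [integral_congr_ae (Filter.Eventually.of_forall hconst)]
      simp
    have : ∀ x, Real.exp (L * (f x - ∫ y, f y ∂(Measure.pi μ))) = 1 := by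
      intro x; rw [hint, hconst x]; simp
    rw [integral_congr_ae (Filter.Eventually.of_forall this)]
    simp
  | succ n ih =>
    intro Ω inst μ hprob c f hf hlip L
    haveI := hprob
    haveI : ∀ i, Nonempty (Ω i) := fun i => mcdiarmid_nonempty (μ i)
    set Pm := Measure.pi μ with hPm
    haveI : IsProbabilityMeasure Pm := by infer_instance
    set ν := μ 0 with hν
    set Pm' := Measure.pi (fun j : Fin n => μ ((0 : Fin (n + 1)).succAbove j)) with hPm'
    haveI : IsProbabilityMeasure Pm' := by infer_instance
    set e := MeasurableEquiv.piFinSuccAbove Ω 0 with he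
    have hmp : MeasurePreserving e Pm (ν.prod Pm') := measurePreserving_piFinSuccAbove μ 0
    set m := ∫ y, f y ∂Pm with hm
    set F : Ω 0 × (∀ j : Fin n, Ω ((0 : Fin (n + 1)).succAbove j)) → ℝ :=
      fun q => f (e.symm q) with hF
    have hFmeas : Measurable F := hf.comp e.symm.measurable
    -- boundedness
    obtain ⟨x₀⟩ : Nonempty (∀ i, Ω i) := ⟨fun i => Classical.arbitrary _⟩
    have hc0 : ∀ i, 0 ≤ c i := fun i => by simpa using hlip i x₀ x₀ (fun _ _ => rfl)
    set M := |f x₀| + ∑ i, c i with hM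
    have hbd : ∀ x, |f x| ≤ M := by
      intro x
      have h1 := mcdiarmid_osc c f hlip x x₀
      calc |f x| = |(f x - f x₀) + f x₀| := by ring_nf
        _ ≤ |f x - f x₀| + |f x₀| := abs_add_le _ _
        _ ≤ M := by rw [hM]; linarith
    have hFbd : ∀ q, |F q| ≤ M := fun q => hbd _
    -- the conditional mean
    set h : (∀ j : Fin n, Ω ((0 : Fin (n + 1)).succAbove j)) → ℝ :=
      fun z => ∫ a, F (a, z) ∂ν with hh
    have hhmeas : Measurable h :=
      hFmeas.stronglyMeasurable.integral_prod_left'.measurable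
    have hFzint : ∀ z, Integrable (fun a => F (a, z)) ν := fun z =>
      mcdiarmid_bint (hFmeas.comp (measurable_id.prodMk measurable_const))
        (fun a => hFbd (a, z))
    have hhbd : ∀ z, |h z| ≤ M := by
      intro z
      calc |h z| ≤ ∫ a, |F (a, z)| ∂ν := mcdiarmid_absint _ _
        _ ≤ ∫ _, M ∂ν := integral_mono (hFzint z).abs (integrable_const M)
            (fun a => hFbd (a, z))
        _ = M := by simp
    -- coordinates of e.symm
    have hsymmEq : ∀ (a : Ω 0) z, e.symm (a, z) = (Fin.insertNthEquiv Ω 0) (a, z) := by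
      intro a z; rfl
    have hsymm0 : ∀ (a : Ω 0) z, e.symm (a, z) 0 = a := by
      intro a z
      rw [hsymmEq, Fin.insertNthEquiv_apply, Fin.insertNth_apply_same]
    have hsymmS : ∀ (a : Ω 0) z (j : Fin n),
        e.symm (a, z) ((0 : Fin (n + 1)).succAbove j) = z j := by
      intro a z j
      rw [hsymmEq, Fin.insertNthEquiv_apply, Fin.insertNth_apply_succAbove]
    -- f x = F (e x)
    have hfe : ∀ x, f x = F (e x) := fun x => by rw [hF]; simp; exact congrArg f (e.symm_apply_apply x).symm
    -- lipschitz property of h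
    have hhlip : ∀ (j : Fin n) z z', (∀ k, k ≠ j → z k = z' k) →
        |h z - h z'| ≤ c ((0 : Fin (n + 1)).succAbove j) := by
      intro j z z' hzz
      have hptw : ∀ a, |F (a, z) - F (a, z')| ≤ c ((0 : Fin (n + 1)).succAbove j) := by
        intro a
        apply hlip _ (e.symm (a, z)) (e.symm (a, z'))
        intro i hi
        rcases eq_or_ne i 0 with rfl | hi0
        · rw [hsymm0, hsymm0]
        · obtain ⟨k, rfl⟩ := Fin.exists_succAbove_eq hi0
          rw [hsymmS, hsymmS]
          exact hzz k (fun hk => hi (by rw [hk]))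
      have hsub : h z - h z' = ∫ a, (F (a, z) - F (a, z')) ∂ν :=
        (integral_sub (hFzint z) (hFzint z')).symm
      rw [hsub]
      calc |∫ a, (F (a, z) - F (a, z')) ∂ν| ≤ ∫ a, |F (a, z) - F (a, z')| ∂ν :=
            mcdiarmid_absint _ _
        _ ≤ ∫ _, c ((0 : Fin (n + 1)).succAbove j) ∂ν :=
            integral_mono ((hFzint z).sub (hFzint z')).abs (integrable_const _) hptw
        _ = _ := by simp
    -- oscillation of F in the first variable
    have hosc0 : ∀ z a a', |F (a, z) - F (a', z)| ≤ c 0 := by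
      intro z a a'
      apply hlip 0 (e.symm (a, z)) (e.symm (a', z))
      intro i hi
      obtain ⟨k, rfl⟩ := Fin.exists_succAbove_eq hi
      rw [hsymmS, hsymmS]
    -- integrability of exp integrands
    have hexpbd : ∀ (w : ℝ), |w| ≤ M → ∀ (m' : ℝ), |m'| ≤ M →
        Real.exp (L * (w - m')) ≤ Real.exp (|L| * (2 * M)) := by
      intro w hw m' hm'
      rw [Real.exp_le_exp]
      calc L * (w - m') ≤ |L * (w - m')| := le_abs_self _
        _ = |L| * |w - m'| := abs_mul _ _
        _ ≤ |L| * (2 * M) := mul_le_mul_of_nonneg_left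
            (by have := abs_sub_abs_le_abs_sub w m'; have := abs_sub (w) (m'); 
                calc |w - m'| ≤ |w| + |m'| := abs_sub _ _
                  _ ≤ 2 * M := by linarith)
            (abs_nonneg L)
    have hmM : |m| ≤ M := by
      rw [hm]
      calc |∫ y, f y ∂Pm| ≤ ∫ y, |f y| ∂Pm := mcdiarmid_absint _ _
        _ ≤ ∫ _, M ∂Pm := integral_mono (mcdiarmid_bint hf hbd).abs (integrable_const M) hbd
        _ = M := by simp
    set K := Real.exp (|L| * (2 * M)) with hK
    have hexpint : Integrable (fun q => Real.exp (L * (F q - m))) (ν.prod Pm') := by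
      apply mcdiarmid_bint (((hFmeas.sub measurable_const).const_mul L).exp)
      intro q
      rw [abs_of_pos (Real.exp_pos _)]
      exact hexpbd _ (hFbd q) _ hmM
    -- step 1: transfer to the product
    have step1 : ∫ x, Real.exp (L * (f x - m)) ∂Pm
        = ∫ q, Real.exp (L * (F q - m)) ∂(ν.prod Pm') := by
      rw [← hmp.integral_comp e.measurableEmbedding]
      refine integral_congr_ae (Filter.Eventually.of_forall fun x => ?_)
      show Real.exp (L * (f x - m)) = Real.exp (L * (F (e x) - m))
      rw [hfe x]
    -- step 2: Fubini
    have step2 : ∫ q, Real.exp (L * (F q - m)) ∂(ν.prod Pm')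
        = ∫ z, (∫ a, Real.exp (L * (F (a, z) - m)) ∂ν) ∂Pm' :=
      integral_prod_symm _ hexpint
    -- step 3: inner factorization
    have step3 : ∀ z, ∫ a, Real.exp (L * (F (a, z) - m)) ∂ν
        = Real.exp (L * (h z - m)) * ∫ a, Real.exp (L * (F (a, z) - h z)) ∂ν := by
      intro z
      rw [← integral_const_mul]
      refine integral_congr_ae (Filter.Eventually.of_forall fun a => ?_)
      show Real.exp (L * (F (a, z) - m)) = Real.exp (L * (h z - m)) * Real.exp (L * (F (a, z) - h z))
      rw [← Real.exp_add]
      congr 1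
      ring
    -- step 4: Hoeffding bound on inner integral
    have step4 : ∀ z, ∫ a, Real.exp (L * (F (a, z) - h z)) ∂ν
        ≤ Real.exp (L ^ 2 * (c 0) ^ 2 / 4) := by
      intro z
      exact mcdiarmid_hoeffding ν (fun a => F (a, z))
        (hFmeas.comp (measurable_id.prodMk measurable_const)) (c 0) L (hc0 0)
        (hosc0 z)
    -- measurability of inner integral
    have hinner_meas : Measurable fun z => ∫ a, Real.exp (L * (F (a, z) - h z)) ∂ν := by
      have : Measurable fun q : Ω 0 × (∀ j : Fin n, Ω ((0 : Fin (n + 1)).succAbove j)) =>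
          Real.exp (L * (F q - h q.2)) :=
        ((hFmeas.sub (hhmeas.comp measurable_snd)).const_mul L).exp
      exact this.stronglyMeasurable.integral_prod_left'.measurable
    have hinner_nonneg : ∀ z, 0 ≤ ∫ a, Real.exp (L * (F (a, z) - h z)) ∂ν := fun z =>
      integral_nonneg fun a => (Real.exp_pos _).le
    -- step 5: integrate over z
    set C0 := Real.exp (L ^ 2 * (c 0) ^ 2 / 4) with hC0
    have hg1int : Integrable
        (fun z => Real.exp (L * (h z - m)) * ∫ a, Real.exp (L * (F (a, z) - h z)) ∂ν) Pm' := by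
      apply mcdiarmid_bint ((((hhmeas.sub measurable_const).const_mul L).exp).mul hinner_meas)
        (M := K * C0)
      intro z
      show |Real.exp (L * (h z - m)) * ∫ a, Real.exp (L * (F (a, z) - h z)) ∂ν| ≤ K * C0
      rw [abs_mul, abs_of_pos (Real.exp_pos _), abs_of_nonneg (hinner_nonneg z)]
      exact mul_le_mul (hexpbd _ (hhbd z) _ hmM) (step4 z) (hinner_nonneg z)
        (Real.exp_pos _).le
    have hg2int : Integrable (fun z => Real.exp (L * (h z - m)) * C0) Pm' := by
      apply mcdiarmid_bint (((hhmeas.sub measurable_const).const_mul L).exp.mul_const C0)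
        (M := K * C0)
      intro z
      rw [abs_mul, abs_of_pos (Real.exp_pos _), abs_of_pos (Real.exp_pos _)]
      exact mul_le_mul_of_nonneg_right (hexpbd _ (hhbd z) _ hmM) (Real.exp_pos _).le
    have step5 : ∫ z, (∫ a, Real.exp (L * (F (a, z) - m)) ∂ν) ∂Pm'
        ≤ (∫ z, Real.exp (L * (h z - m)) ∂Pm') * C0 := by
      calc ∫ z, (∫ a, Real.exp (L * (F (a, z) - m)) ∂ν) ∂Pm'
          = ∫ z, Real.exp (L * (h z - m)) * ∫ a, Real.exp (L * (F (a, z) - h z)) ∂ν ∂Pm' :=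
            integral_congr_ae (Filter.Eventually.of_forall fun z => step3 z)
        _ ≤ ∫ z, Real.exp (L * (h z - m)) * C0 ∂Pm' :=
            integral_mono hg1int hg2int fun z =>
              mul_le_mul_of_nonneg_left (step4 z) (Real.exp_pos _).le
        _ = (∫ z, Real.exp (L * (h z - m)) ∂Pm') * C0 := integral_mul_const _ _
    -- step 6: identify m with the mean of h and apply IH
    have hFint : Integrable F (ν.prod Pm') := mcdiarmid_bint hFmeas hFbd
    have hmh : m = ∫ z, h z ∂Pm' := by
      rw [hm]
      calc ∫ y, f y ∂Pm = ∫ x, F (e x) ∂Pm :=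
            integral_congr_ae (Filter.Eventually.of_forall fun x => hfe x)
        _ = ∫ q, F q ∂(ν.prod Pm') := hmp.integral_comp e.measurableEmbedding F
        _ = ∫ z, (∫ a, F (a, z) ∂ν) ∂Pm' := integral_prod_symm F hFint
        _ = ∫ z, h z ∂Pm' := rfl
    have step7 : ∫ z, Real.exp (L * (h z - m)) ∂Pm'
        ≤ Real.exp (L ^ 2 * (∑ j, c ((0 : Fin (n + 1)).succAbove j) ^ 2) / 4) := by
      rw [hmh]
      exact ih (fun j => Ω ((0 : Fin (n + 1)).succAbove j)) (fun j => inst _) (fun j => μ _)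
        (fun j => hprob _) (fun j => c ((0 : Fin (n + 1)).succAbove j)) h hhmeas hhlip L
    have hC0pos : (0:ℝ) ≤ C0 := (Real.exp_pos _).le
    calc ∫ x, Real.exp (L * (f x - m)) ∂Pm
        = ∫ z, (∫ a, Real.exp (L * (F (a, z) - m)) ∂ν) ∂Pm' := by rw [step1, step2]
      _ ≤ (∫ z, Real.exp (L * (h z - m)) ∂Pm') * C0 := step5
      _ ≤ Real.exp (L ^ 2 * (∑ j, c ((0 : Fin (n + 1)).succAbove j) ^ 2) / 4) * C0 :=
          mul_le_mul_of_nonneg_right step7 hC0pos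
      _ = Real.exp (L ^ 2 * (∑ i, c i ^ 2) / 4) := by
          rw [hC0, ← Real.exp_add]
          congr 1
          rw [Fin.sum_univ_succAbove (fun i => c i ^ 2) 0]
          ring

/-- McDiarmid's bounded-differences inequality: if `X₁,…,Xₙ` are independent (modelled
by the product of probability measures `μ i`) and `f` changes by at most `c i` when the
`i`-th coordinate is changed, then
`ℙ(|f(X) − 𝔼 f(X)| > t) ≤ 2 exp(−t² / ∑ᵢ cᵢ²)`. -/
theorem stmt12 {n : ℕ} {Ω : Fin n → Type*} [∀ i, MeasurableSpace (Ω i)]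
    (μ : ∀ i, Measure (Ω i)) [∀ i, IsProbabilityMeasure (μ i)]
    (c : Fin n → ℝ) (hc : ∀ i, 0 ≤ c i)
    (f : (∀ i, Ω i) → ℝ) (hf : Measurable f)
    (hlip : ∀ (i : Fin n) (x y : ∀ i, Ω i),
      (∀ j, j ≠ i → x j = y j) → |f x - f y| ≤ c i)
    (t : ℝ) (ht : 0 < t) :
    (Measure.pi μ) {x | |f x - ∫ y, f y ∂(Measure.pi μ)| > t}
      ≤ ENNReal.ofReal (2 * Real.exp (-t ^ 2 / ∑ i, (c i) ^ 2)) := by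
  classical
  set P := Measure.pi μ with hP
  haveI : IsProbabilityMeasure P := by rw [hP]; infer_instance
  haveI : ∀ i, Nonempty (Ω i) := fun i => mcdiarmid_nonempty (μ i)
  set S := ∑ i, c i ^ 2 with hS
  have hS0 : 0 ≤ S := Finset.sum_nonneg fun i _ => sq_nonneg _
  set m := ∫ y, f y ∂P with hm
  rcases eq_or_lt_of_le hS0 with hS0' | hSpos
  · -- degenerate case
    have h1 : P {x | |f x - m| > t} ≤ 1 := prob_le_one
    have h2 : (1 : ENNReal) ≤ ENNReal.ofReal (2 * Real.exp (-t ^ 2 / S)) := by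
      rw [← hS0', div_zero, Real.exp_zero, mul_one]
      rw [show (1 : ENNReal) = ENNReal.ofReal 1 by simp]
      exact ENNReal.ofReal_le_ofReal (by norm_num)
    exact h1.trans h2
  -- main case
  obtain ⟨x₀⟩ : Nonempty (∀ i, Ω i) := ⟨fun i => Classical.arbitrary _⟩
  set M := |f x₀| + ∑ i, c i with hM
  have hbd : ∀ x, |f x| ≤ M := by
    intro x
    have h1 := mcdiarmid_osc c f hlip x x₀
    calc |f x| = |(f x - f x₀) + f x₀| := by ring_nf
      _ ≤ |f x - f x₀| + |f x₀| := abs_add_le _ _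
      _ ≤ M := by rw [hM]; linarith
  have hfint : Integrable f P := mcdiarmid_bint hf hbd
  have hmM : |m| ≤ M := by
    rw [hm]
    calc |∫ y, f y ∂P| ≤ ∫ y, |f y| ∂P := by
          simpa [Real.norm_eq_abs] using norm_integral_le_integral_norm (μ := P) f
      _ ≤ ∫ _, M ∂P := integral_mono hfint.abs (integrable_const M) hbd
      _ = M := by simp
  set L := 2 * t / S with hL
  have hLpos : 0 < L := by positivity
  have hint1 : Integrable (fun x => Real.exp (L * (f x - m))) P := by
    apply mcdiarmid_bint (((hf.sub measurable_const).const_mul L).exp) (M := Real.exp (L * (2 * M)))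
    intro x
    rw [abs_of_pos (Real.exp_pos _), Real.exp_le_exp]
    have : |f x - m| ≤ 2 * M := by
      calc |f x - m| ≤ |f x| + |m| := abs_sub _ _
        _ ≤ 2 * M := by linarith [hbd x]
    calc L * (f x - m) ≤ |L * (f x - m)| := le_abs_self _
      _ = L * |f x - m| := by rw [abs_mul, abs_of_pos hLpos]
      _ ≤ L * (2 * M) := mul_le_mul_of_nonneg_left this hLpos.le
  have hint2 : Integrable (fun x => Real.exp (L * (m - f x))) P := by
    apply mcdiarmid_bint (((measurable_const.sub hf).const_mul L).exp) (M := Real.exp (L * (2 * M)))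
    intro x
    rw [abs_of_pos (Real.exp_pos _), Real.exp_le_exp]
    have : |m - f x| ≤ 2 * M := by
      calc |m - f x| ≤ |m| + |f x| := abs_sub _ _
        _ ≤ 2 * M := by linarith [hbd x]
    calc L * (m - f x) ≤ |L * (m - f x)| := le_abs_self _
      _ = L * |m - f x| := by rw [abs_mul, abs_of_pos hLpos]
      _ ≤ L * (2 * M) := mul_le_mul_of_nonneg_left this hLpos.le
  -- mgf bounds
  have hmgf1 : ProbabilityTheory.mgf (fun x => f x - m) P L ≤ Real.exp (L ^ 2 * S / 4) := by
    have := mcdiarmid_mgf n Ω (fun i => inferInstance) μ (fun i => inferInstance) c f hf hlip L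
    rw [← hP, ← hm, ← hS] at this
    exact this
  have hmgf2 : ProbabilityTheory.mgf (fun x => m - f x) P L ≤ Real.exp (L ^ 2 * S / 4) := by
    have hlip' : ∀ (i : Fin n) (x y : ∀ i, Ω i),
        (∀ j, j ≠ i → x j = y j) → |(-f) x - (-f) y| ≤ c i := by
      intro i x y hxy
      simp only [Pi.neg_apply]
      rw [show -f x - -f y = -(f x - f y) by ring, abs_neg]
      exact hlip i x y hxy
    have := mcdiarmid_mgf n Ω (fun i => inferInstance) μ (fun i => inferInstance) c (-f) hf.neg
      hlip' L
    rw [← hP, ← hS] at this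
    have hneg : ∫ y, (-f) y ∂P = -m := by
      rw [hm]
      simpa using integral_neg (μ := P) f
    rw [hneg] at this
    calc ProbabilityTheory.mgf (fun x => m - f x) P L
        = ∫ x, Real.exp (L * ((-f) x - (-m))) ∂P := by
          unfold ProbabilityTheory.mgf
          refine integral_congr_ae (Filter.Eventually.of_forall fun x => ?_)
          show Real.exp (L * (m - f x)) = Real.exp (L * ((-f) x - (-m)))
          congr 1
          simp only [Pi.neg_apply]
          ring
      _ ≤ Real.exp (L ^ 2 * S / 4) := this
  -- Chernoff
  have hchern : -L * t + L ^ 2 * S / 4 = -t ^ 2 / S := by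
    rw [hL]
    field_simp
    ring
  have h1 : (P {x | t ≤ f x - m}).toReal ≤ Real.exp (-t ^ 2 / S) := by
    calc (P {x | t ≤ f x - m}).toReal
        ≤ Real.exp (-L * t) * ProbabilityTheory.mgf (fun x => f x - m) P L :=
          ProbabilityTheory.measure_ge_le_exp_mul_mgf t hLpos.le hint1
      _ ≤ Real.exp (-L * t) * Real.exp (L ^ 2 * S / 4) :=
          mul_le_mul_of_nonneg_left hmgf1 (Real.exp_pos _).le
      _ = Real.exp (-t ^ 2 / S) := by rw [← Real.exp_add, hchern]
  have h2 : (P {x | t ≤ m - f x}).toReal ≤ Real.exp (-t ^ 2 / S) := by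
    calc (P {x | t ≤ m - f x}).toReal
        ≤ Real.exp (-L * t) * ProbabilityTheory.mgf (fun x => m - f x) P L :=
          ProbabilityTheory.measure_ge_le_exp_mul_mgf t hLpos.le hint2
      _ ≤ Real.exp (-L * t) * Real.exp (L ^ 2 * S / 4) :=
          mul_le_mul_of_nonneg_left hmgf2 (Real.exp_pos _).le
      _ = Real.exp (-t ^ 2 / S) := by rw [← Real.exp_add, hchern]
  have hsub : {x | |f x - m| > t} ⊆ {x | t ≤ f x - m} ∪ {x | t ≤ m - f x} := by
    intro x hx
    simp only [Set.mem_setOf_eq, gt_iff_lt] at hx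
    rcases abs_cases (f x - m) with ⟨h, _⟩ | ⟨h, _⟩
    · left; show t ≤ f x - m; linarith
    · right; show t ≤ m - f x; linarith
  calc P {x | |f x - m| > t}
      ≤ P ({x | t ≤ f x - m} ∪ {x | t ≤ m - f x}) := measure_mono hsub
    _ ≤ P {x | t ≤ f x - m} + P {x | t ≤ m - f x} := measure_union_le _ _
    _ ≤ ENNReal.ofReal (Real.exp (-t ^ 2 / S)) + ENNReal.ofReal (Real.exp (-t ^ 2 / S)) := by
        gcongr
        · rw [← ENNReal.ofReal_toReal (measure_ne_top P _)]
          exact ENNReal.ofReal_le_ofReal h1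
        · rw [← ENNReal.ofReal_toReal (measure_ne_top P _)]
          exact ENNReal.ofReal_le_ofReal h2
    _ = ENNReal.ofReal (2 * Real.exp (-t ^ 2 / S)) := by
        rw [← ENNReal.ofReal_add (Real.exp_pos _).le (Real.exp_pos _).le]
        congr 1
        ring
end
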